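/- arXiv:1710.07420 — 2 statements merged into one kernel-verified Lean document; each statement's English description precedes it below -/
import Mathlib

section
/- Let Δ_1, Δ_2 ∈ ℝ satisfy 0 < |Δ_1| < |Δ_2|. Then for every positive integer k, P[|L_{Δ_1}| ≤ k] ≤ P[|L_{Δ_2}| ≤ k]. -/
open MeasureTheory ProbabilityTheory Filter

/-- Two-sided Gaussian random walk:
`X_Δ(i) = sgn(Δ)(ε₁+⋯+ε_i) + i|Δ|/2` for `i > 0`, `X_Δ(0) = 0`, and
`X_Δ(i) = −sgn(Δ)(ε_{i+1}+⋯+ε_0) + |i|·|Δ|/2` for `i < 0`. -/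
noncomputable def walkX {Ω : Type*} (ε : ℤ → Ω → ℝ) (Δ : ℝ) (i : ℤ) (ω : Ω) : ℝ :=
  if 0 < i then Real.sign Δ * (∑ j ∈ Finset.Icc (1 : ℤ) i, ε j ω) + (i : ℝ) * |Δ| / 2
  else if i < 0 then
    -(Real.sign Δ * (∑ j ∈ Finset.Icc (i + 1) (0 : ℤ), ε j ω)) + ((|i| : ℤ) : ℝ) * |Δ| / 2
  else 0

/-- `L` is almost surely the unique minimizer of the process `f` over `ℤ`. -/
def IsASUniqueArgmin {Ω : Type*} [MeasurableSpace Ω] (μ : Measure Ω)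
    (f : ℤ → Ω → ℝ) (L : Ω → ℤ) : Prop :=
  ∀ᵐ ω ∂μ, ∀ i : ℤ, i ≠ L ω → f (L ω) ω < f i ω

/-!
Drive all the walks by the same noise. For drifts of the same sign,
`X_{Δ'}(i) = X_Δ(i) + |i| (|Δ'| - |Δ|) / 2`, and adding a penalty that grows with `|i|` can only
help a site in `[-k, k]` to stay strictly below every site outside it; so for `|Δ| ≤ |Δ'|` the event
`|L_Δ| ≤ k` is contained, up to a null set, in `|L_{Δ'}| ≤ k`. The sign of the drift is irrelevant
because the joint law of the i.i.d. Gaussian noise is invariant under `ε ↦ -ε`.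
-/

namespace GaussianWalkArgmin

variable {Ω : Type*}

/-- Up to a null set this is `{|L| ≤ K}` for the unique argmin `L` of `f`, but it is defined from `f`
alone, so for the walk it is a measurable function of the noise path. -/
def argminWithin (f : ℤ → Ω → ℝ) (K : ℤ) : Set Ω :=
  {ω | ∃ j, |j| ≤ K ∧ ∀ i, K < |i| → f j ω < f i ω}

lemma argminWithin_mono {f g : ℤ → Ω → ℝ} {c : ℝ} (hc : 0 ≤ c)
    (hg : ∀ i ω, g i ω = f i ω + |i| * c) (K : ℤ) :
    argminWithin f K ⊆ argminWithin g K := by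
  rintro ω ⟨j, hjK, hj⟩
  refine ⟨j, hjK, fun i hiK => ?_⟩
  have hji : ((|j| : ℤ) : ℝ) ≤ |i| := by exact_mod_cast (hjK.trans_lt hiK).le
  rw [hg, hg]
  nlinarith [hj i hiK]

lemma measurableSet_argminWithin [MeasurableSpace Ω] {f : ℤ → Ω → ℝ}
    (hf : ∀ i, Measurable (f i)) (K : ℤ) : MeasurableSet (argminWithin f K) := by
  unfold argminWithin
  measurability

lemma IsASUniqueArgmin.setOf_abs_le_ae_eq [MeasurableSpace Ω] {μ : Measure Ω}
    {f : ℤ → Ω → ℝ} {L : Ω → ℤ} (hL : IsASUniqueArgmin μ f L) (K : ℤ) :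
    {ω | |L ω| ≤ K} =ᵐ[μ] argminWithin f K := by
  rw [Filter.eventuallyEq_set]
  filter_upwards [hL] with ω hω
  constructor
  · intro hLK
    exact ⟨L ω, hLK, fun i hiK => hω i fun h => (h ▸ hiK).not_ge hLK⟩
  · rintro ⟨j, hjK, hj⟩
    by_contra! hLK
    exact (hj (L ω) hLK).not_gt (hω j fun h => (h ▸ hjK).not_gt hLK)

lemma walkX_neg (ε : ℤ → Ω → ℝ) (Δ : ℝ) :
    walkX ε (-Δ) = walkX (fun j ω => -ε j ω) Δ := by
  ext i ω
  unfold walkX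
  split_ifs <;> simp [Real.sign_neg, Finset.sum_neg_distrib]

lemma walkX_eq_add_of_sign_eq (ε : ℤ → Ω → ℝ) {Δ Δ' : ℝ} (h : Real.sign Δ = Real.sign Δ')
    (i : ℤ) (ω : Ω) :
    walkX ε Δ' i ω = walkX ε Δ i ω + |i| * ((|Δ'| - |Δ|) / 2) := by
  unfold walkX
  rw [h]
  split_ifs with hpos hneg
  · rw [abs_of_pos hpos]; ring
  · rw [abs_of_neg hneg]; push_cast; ring
  · simp [le_antisymm (not_lt.mp hpos) (not_lt.mp hneg)]

lemma measurable_walkX [MeasurableSpace Ω] {ε : ℤ → Ω → ℝ} (hε : ∀ i, Measurable (ε i))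
    (Δ : ℝ) (i : ℤ) : Measurable (walkX ε Δ i) := by
  unfold walkX
  split_ifs <;> fun_prop

lemma map_neg_eq_map_of_iIndepFun {ι : Type*} [MeasurableSpace Ω] {μ : Measure Ω}
    [IsProbabilityMeasure μ] {ε : ι → Ω → ℝ} (hε : ∀ i, Measurable (ε i))
    (hindep : iIndepFun ε μ) (hsymm : ∀ i, (μ.map (ε i)).map Neg.neg = μ.map (ε i)) :
    μ.map (fun ω i => -ε i ω) = μ.map (fun ω i => ε i ω) := by
  have hindep_neg : iIndepFun (fun i ω => -ε i ω) μ :=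
    hindep.comp (fun _ => Neg.neg) fun _ => measurable_neg
  rw [hindep_neg.map_fun_eq_infinitePi_map fun i => by fun_prop,
    hindep.map_fun_eq_infinitePi_map hε]
  congr with i : 1
  rw [← hsymm i, Measure.map_map measurable_neg (hε i)]
  rfl

section Symmetry

variable [MeasurableSpace Ω] {μ : Measure Ω} [IsProbabilityMeasure μ] {ε : ℤ → Ω → ℝ}

lemma measure_argminWithin_walkX_neg (hε : ∀ i, Measurable (ε i)) (hindep : iIndepFun ε μ)
    (hsymm : ∀ i, (μ.map (ε i)).map Neg.neg = μ.map (ε i)) (Δ : ℝ) (K : ℤ) :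
    μ (argminWithin (walkX ε (-Δ)) K) = μ (argminWithin (walkX ε Δ) K) := by
  have hpath : ∀ ε' : ℤ → Ω → ℝ, argminWithin (walkX ε' Δ) K =
      (fun ω i => ε' i ω) ⁻¹' argminWithin (walkX (fun i x => x i) Δ) K := fun _ => rfl
  have hS : MeasurableSet (argminWithin (walkX (fun i (x : ℤ → ℝ) => x i) Δ) K) :=
    measurableSet_argminWithin (measurable_walkX measurable_pi_apply Δ) K
  rw [walkX_neg, hpath, hpath, ← Measure.map_apply (by fun_prop) hS,
    ← Measure.map_apply (by fun_prop) hS, map_neg_eq_map_of_iIndepFun hε hindep hsymm]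

lemma measure_argminWithin_walkX_abs (hε : ∀ i, Measurable (ε i)) (hindep : iIndepFun ε μ)
    (hsymm : ∀ i, (μ.map (ε i)).map Neg.neg = μ.map (ε i)) (Δ : ℝ) (K : ℤ) :
    μ (argminWithin (walkX ε |Δ|) K) = μ (argminWithin (walkX ε Δ) K) := by
  rcases abs_choice Δ with h | h <;> rw [h]
  exact measure_argminWithin_walkX_neg hε hindep hsymm Δ K

end Symmetry

end GaussianWalkArgmin

open GaussianWalkArgmin

/-- If `0 < |Δ₁| < |Δ₂|`, then for every positive integer `k`,
`P[|L_{Δ₁}| ≤ k] ≤ P[|L_{Δ₂}| ≤ k]`, where `L_Δ` is the a.s. unique minimizer of the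
two-sided Gaussian random walk `X_Δ` driven by i.i.d. standard normal increments. -/
theorem argmin_stochastic_ordering
    {Ω : Type*} [MeasurableSpace Ω] (μ : Measure Ω) [IsProbabilityMeasure μ]
    (ε : ℤ → Ω → ℝ)
    (hmeas : ∀ i, Measurable (ε i))
    (hindep : iIndepFun ε μ)
    (hgauss : ∀ i, Measure.map (ε i) μ = gaussianReal 0 1)
    (Δ₁ Δ₂ : ℝ) (h₁ : 0 < |Δ₁|) (h₁₂ : |Δ₁| < |Δ₂|)
    (L : ℝ → Ω → ℤ)
    (hL₁ : IsASUniqueArgmin μ (walkX ε Δ₁) (L Δ₁))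
    (hL₂ : IsASUniqueArgmin μ (walkX ε Δ₂) (L Δ₂)) :
    ∀ k : ℕ, 0 < k →
      μ {ω | |L Δ₁ ω| ≤ (k : ℤ)} ≤ μ {ω | |L Δ₂ ω| ≤ (k : ℤ)} := by
  intro k _
  have hsymm : ∀ i, (μ.map (ε i)).map Neg.neg = μ.map (ε i) := fun i => by
    rw [hgauss i, gaussianReal_map_neg, neg_zero]
  have hsign : Real.sign |Δ₁| = Real.sign |Δ₂| := by
    rw [Real.sign_of_pos h₁, Real.sign_of_pos (h₁.trans h₁₂)]
  calc μ {ω | |L Δ₁ ω| ≤ (k : ℤ)}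
      = μ (argminWithin (walkX ε |Δ₁|) k) := by
        rw [measure_congr (hL₁.setOf_abs_le_ae_eq k),
          measure_argminWithin_walkX_abs hmeas hindep hsymm]
    _ ≤ μ (argminWithin (walkX ε |Δ₂|) k) := by
        refine measure_mono (argminWithin_mono ?_ (walkX_eq_add_of_sign_eq ε hsign) k)
        simp only [abs_abs]
        linarith
    _ = μ {ω | |L Δ₂ ω| ≤ (k : ℤ)} := by
        rw [measure_congr (hL₂.setOf_abs_le_ae_eq k),
          measure_argminWithin_walkX_abs hmeas hindep hsymm]
end

section
/- Let Δ ≠ 0, let m be a positive integer, and let S ⊆ ℤ be a set of integers containing the interval [−m, m]. Then P[ the a.s. unique minimizer of X_Δ over S has absolute value greater than m ] ≤ (2·e^{−Δ²/8}/(1 − e^{−Δ²/8}))·e^{−m·Δ²/8}; equivalently, the probability that there exists t ∈ S with |t| > m and X_Δ(t) ≤ X_Δ(s) for all s ∈ S is at most this bound. In particular the bound has the form A(Δ)·exp(−B(Δ)·m) with A(Δ) := 2e^{−Δ²/8}/(1 − e^{−Δ²/8}) decreasing and B(Δ) := Δ²/8 increasing in |Δ|. -/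
/-!
Since `X_Δ(0) = 0`, a minimizer `t` of `X_Δ` over `S ∋ 0` satisfies `X_Δ(t) ≤ 0`. Up to a sign,
`X_Δ(t)` is `|t||Δ|/2` minus a sum of `|t|` independent standard Gaussians, so Hoeffding's bound
for sub-Gaussian sums gives `P(X_Δ(t) ≤ 0) ≤ exp(-(|t||Δ|/2)² / (2|t|)) = r^|t|` with
`r = exp(-Δ²/8)`. A union bound over `|t| > m` leaves two geometric series, of total
`2 r^(m+1) / (1 - r)`.
-/

open MeasureTheory ProbabilityTheory Filter

open scoped NNReal

theorem exists_walkX_eq_sum {Ω : Type*} {ε : ℤ → Ω → ℝ} {Δ : ℝ} (hΔ : Δ ≠ 0) (t : ℤ) :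
    ∃ (I : Finset ℤ) (σ : ℝ), I.card = t.natAbs ∧ σ ^ 2 = 1 ∧
      ∀ ω, walkX ε Δ t ω = t.natAbs * |Δ| / 2 - ∑ j ∈ I, σ * ε j ω := by
  have hsign : Real.sign Δ ^ 2 = 1 := by
    rcases hΔ.lt_or_gt with h | h <;> simp [Real.sign_of_neg, Real.sign_of_pos, h]
  rcases lt_trichotomy t 0 with ht | rfl | ht
  · refine ⟨Finset.Icc (t + 1) 0, Real.sign Δ, by rw [Int.card_Icc]; omega, hsign, fun ω ↦ ?_⟩
    simp only [walkX, ht.not_gt, ↓reduceIte, ht, Int.cast_abs, Nat.cast_natAbs, ← Finset.mul_sum]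
    ring
  · exact ⟨∅, 1, rfl, one_pow 2, fun ω ↦ by simp [walkX]⟩
  · refine ⟨Finset.Icc 1 t, -Real.sign Δ, by rw [Int.card_Icc]; omega, by rwa [neg_sq], fun ω ↦ ?_⟩
    simp only [walkX, ht, ↓reduceIte, Nat.cast_natAbs, abs_of_pos, ← Finset.mul_sum]
    ring

section

variable {Ω : Type*} [MeasurableSpace Ω] {μ : Measure Ω}

theorem hasSubgaussianMGF_of_map_eq_gaussianReal {X : Ω → ℝ} {v : ℝ≥0}
    (hX : μ.map X = gaussianReal 0 v) : HasSubgaussianMGF X v μ := by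
  have hX_meas : AEMeasurable X μ := aemeasurable_of_map_neZero (by rw [hX]; infer_instance)
  refine (HasSubgaussianMGF.id_map_iff hX_meas).1 ⟨fun t ↦ ?_, fun t ↦ ?_⟩
  · rw [hX]; exact integrable_exp_mul_gaussianReal t
  · rw [mgf_gaussianReal (by simpa using hX)]; simp

theorem measure_iUnion_abs_gt_le_of_le_pow {A : ℤ → Set Ω} {r : ℝ} (hr₀ : 0 ≤ r) (hr₁ : r < 1)
    (hA : ∀ t, μ (A t) ≤ ENNReal.ofReal (r ^ t.natAbs)) (m : ℕ) :
    μ (⋃ t, ⋃ (_ : (m : ℤ) < |t|), A t) ≤ ENNReal.ofReal (2 * r ^ (m + 1) / (1 - r)) := by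
  have hcover : ⋃ t, ⋃ (_ : (m : ℤ) < |t|), A t ⊆
      ⋃ n : ℕ, (A ((m + 1 + n : ℕ) : ℤ) ∪ A (-((m + 1 + n : ℕ) : ℤ))) := by
    refine Set.iUnion₂_subset fun t ht ↦ Set.subset_iUnion_of_subset (t.natAbs - (m + 1)) ?_
    rw [Int.abs_eq_natAbs] at ht
    rcases (by omega : t = ((m + 1 + (t.natAbs - (m + 1)) : ℕ) : ℤ) ∨
        t = -((m + 1 + (t.natAbs - (m + 1)) : ℕ) : ℤ)) with h | h <;>
      rw [← h]
    exacts [Set.subset_union_left, Set.subset_union_right]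
  have hterm : ∀ n : ℕ, μ (A ((m + 1 + n : ℕ) : ℤ) ∪ A (-((m + 1 + n : ℕ) : ℤ))) ≤
      ENNReal.ofReal (2 * r ^ (m + 1) * r ^ n) := fun n ↦ by
    calc _ ≤ μ (A ((m + 1 + n : ℕ) : ℤ)) + μ (A (-((m + 1 + n : ℕ) : ℤ))) := measure_union_le _ _
      _ ≤ ENNReal.ofReal (r ^ (m + 1 + n)) + ENNReal.ofReal (r ^ (m + 1 + n)) := by
        gcongr
        · exact (hA _).trans_eq (by rw [Int.natAbs_natCast])
        · exact (hA _).trans_eq (by rw [Int.natAbs_neg, Int.natAbs_natCast])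
      _ = ENNReal.ofReal (2 * r ^ (m + 1) * r ^ n) := by
        rw [← ENNReal.ofReal_add (by positivity) (by positivity), pow_add]
        congr 1
        ring
  have hsummable : Summable fun n : ℕ ↦ 2 * r ^ (m + 1) * r ^ n :=
    (summable_geometric_of_lt_one hr₀ hr₁).mul_left _
  calc _ ≤ μ (⋃ n : ℕ, (A ((m + 1 + n : ℕ) : ℤ) ∪ A (-((m + 1 + n : ℕ) : ℤ)))) :=
        measure_mono hcover
    _ ≤ ∑' n : ℕ, ENNReal.ofReal (2 * r ^ (m + 1) * r ^ n) :=
        (measure_iUnion_le _).trans (ENNReal.tsum_le_tsum hterm)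
    _ = ENNReal.ofReal (2 * r ^ (m + 1) / (1 - r)) := by
        rw [← ENNReal.ofReal_tsum_of_nonneg (fun n ↦ by positivity) hsummable, tsum_mul_left,
          tsum_geometric_of_lt_one hr₀ hr₁, div_eq_mul_inv]

theorem measure_walkX_nonpos_le {ε : ℤ → Ω → ℝ} {Δ : ℝ} (hindep : iIndepFun ε μ)
    (hgauss : ∀ i, μ.map (ε i) = gaussianReal 0 1) (hΔ : Δ ≠ 0) (t : ℤ) :
    μ {ω | walkX ε Δ t ω ≤ 0} ≤ ENNReal.ofReal (Real.exp (-(Δ ^ 2) / 8) ^ t.natAbs) := by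
  have := hindep.isProbabilityMeasure
  obtain ⟨I, σ, hI, hσ, hwalk⟩ := exists_walkX_eq_sum (ε := ε) hΔ t
  have hsubG : ∀ j ∈ I, HasSubgaussianMGF (fun ω ↦ σ * ε j ω) 1 μ := fun j _ ↦ by
    convert (hasSubgaussianMGF_of_map_eq_gaussianReal (hgauss j)).const_mul σ
    exact NNReal.eq (show (1 : ℝ) = σ ^ 2 * 1 by rw [hσ, mul_one])
  have hoeffding := HasSubgaussianMGF.measure_sum_ge_le_of_iIndepFun
    (hindep.comp (fun _ x ↦ σ * x) fun _ ↦ measurable_const_mul σ) hsubG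
    (ε := t.natAbs * |Δ| / 2) (by positivity)
  have hset : {ω | walkX ε Δ t ω ≤ 0} = {ω | t.natAbs * |Δ| / 2 ≤ ∑ j ∈ I, σ * ε j ω} := by
    ext ω; simp [hwalk]
  rw [hset, ← ofReal_measureReal, ← Real.exp_nat_mul]
  refine ENNReal.ofReal_le_ofReal (hoeffding.trans_eq ?_)
  have hcard : ((∑ _ ∈ I, (1 : ℝ≥0) : ℝ≥0) : ℝ) = t.natAbs := by simp [hI]
  rw [hcard]
  congr 1
  rcases eq_or_ne t 0 with rfl | ht
  · simp
  · field_simp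
    rw [sq_abs]
    ring

end

theorem argmin_tail_bound_general
    {Ω : Type*} [MeasurableSpace Ω] (μ : Measure Ω) [IsProbabilityMeasure μ]
    (ε : ℤ → Ω → ℝ)
    (hindep : iIndepFun ε μ)
    (hgauss : ∀ i, Measure.map (ε i) μ = gaussianReal 0 1)
    (Δ : ℝ) (hΔ : Δ ≠ 0) (m : ℕ)
    (S : Set ℤ) (hS : Set.Icc (-(m : ℤ)) (m : ℤ) ⊆ S) :
    μ {ω | ∃ t ∈ S, (m : ℤ) < |t| ∧ ∀ s ∈ S, walkX ε Δ t ω ≤ walkX ε Δ s ω}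
      ≤ ENNReal.ofReal
          (2 * Real.exp (-(Δ ^ 2) / 8) / (1 - Real.exp (-(Δ ^ 2) / 8)) *
            Real.exp (-(m : ℝ) * Δ ^ 2 / 8)) := by
  have h0 : (0 : ℤ) ∈ S := hS ⟨by simp, by simp⟩
  have hsub : {ω | ∃ t ∈ S, (m : ℤ) < |t| ∧ ∀ s ∈ S, walkX ε Δ t ω ≤ walkX ε Δ s ω} ⊆
      ⋃ t, ⋃ (_ : (m : ℤ) < |t|), {ω | walkX ε Δ t ω ≤ 0} := by
    rintro ω ⟨t, -, ht, hmin⟩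
    exact Set.mem_biUnion ht (by simpa [walkX] using hmin 0 h0)
  have hr : Real.exp (-(Δ ^ 2) / 8) < 1 := 
    Real.exp_lt_one_iff.2 (by have := sq_pos_of_ne_zero hΔ; linarith)
  calc _ ≤ _ := measure_mono hsub
    _ ≤ _ := measure_iUnion_abs_gt_le_of_le_pow (Real.exp_pos _).le hr
        (measure_walkX_nonpos_le hindep hgauss hΔ) m
    _ = _ := by
      rw [show -(m : ℝ) * Δ ^ 2 / 8 = m * (-(Δ ^ 2) / 8) by ring, Real.exp_nat_mul, pow_succ]
      congr 1
      ring

/-- Exponential tail bound for the minimizer of `X_Δ` over a set `S ⊇ [−m,m]`: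
the probability that some `t ∈ S` with `|t| > m` minimizes `X_Δ` over `S` is at most
`(2 e^{−Δ²/8}/(1 − e^{−Δ²/8})) e^{−mΔ²/8}`. -/
theorem argmin_tail_bound
    {Ω : Type*} [MeasurableSpace Ω] (μ : Measure Ω) [IsProbabilityMeasure μ]
    (ε : ℤ → Ω → ℝ)
    (hmeas : ∀ i, Measurable (ε i))
    (hindep : iIndepFun ε μ)
    (hgauss : ∀ i, Measure.map (ε i) μ = gaussianReal 0 1)
    (Δ : ℝ) (hΔ : Δ ≠ 0) (m : ℕ) (hm : 0 < m)
    (S : Set ℤ) (hS : Set.Icc (-(m : ℤ)) (m : ℤ) ⊆ S) :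
    μ {ω | ∃ t ∈ S, (m : ℤ) < |t| ∧ ∀ s ∈ S, walkX ε Δ t ω ≤ walkX ε Δ s ω}
      ≤ ENNReal.ofReal
          (2 * Real.exp (-(Δ ^ 2) / 8) / (1 - Real.exp (-(Δ ^ 2) / 8)) *
            Real.exp (-(m : ℝ) * Δ ^ 2 / 8)) :=
  argmin_tail_bound_general μ ε hindep hgauss Δ hΔ m S hS
end
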